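/- arXiv:2307.05166 — 3 statements merged into one kernel-verified Lean document; each statement's English description precedes it below -/
import Mathlib

section
/- Let (Γ, μ) be a probability space and T : Γ → Γ a measure-preserving map. Let ε, k be real numbers with 0 < ε and 1 ≤ k ≤ 1/ε, and let E ⊆ Γ be a measurable set with μ(E) = 1 − ε. Let B be the set of points x ∈ Γ at which the Birkhoff time average Â_E(x) = lim_{n→∞} (1/n) ∑_{i=0}^{n−1} 1_E(T^i x) exists and satisfies Â_E(x) < 1 − kε. Then μ(B) < 1/k. -/
open MeasureTheory Filter

/-- The discrete Birkhoff time average up to time `n` of the set `A`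
along the orbit of `x` under the map `T`. -/
noncomputable def birkhoffAvg {Γ : Type*} (T : Γ → Γ) (A : Set Γ) (n : ℕ) (x : Γ) : ℝ :=
  (n : ℝ)⁻¹ * ∑ i ∈ Finset.range n, A.indicator (fun _ => (1 : ℝ)) (T^[i] x)

/-!
Let `h` be the pointwise `liminf` of the Birkhoff averages of `Eᶜ`. By invariance of `μ` each
average has integral `μ Eᶜ ≤ ε`, so Fatou gives `∫⁻ h ≤ ε`. On `B` the averages of `Eᶜ` converge
to `1 - L > kε`, so `B ⊆ {kε < h}`, and the strict form of Markov's inequality gives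
`kε · μ {kε < h} < ∫⁻ h ≤ ε` as soon as `{kε < h}` is not null.
-/

open scoped ENNReal Topology

theorem mul_meas_gt_lt_lintegral {α : Type*} [MeasurableSpace α] {μ : Measure α}
    [IsFiniteMeasure μ] {f : α → ℝ≥0∞} (hf : Measurable f) {c : ℝ≥0∞} (hc : c ≠ ∞)
    (hμ : μ {x | c < f x} ≠ 0) : c * μ {x | c < f x} < ∫⁻ x, f x ∂μ :=
  calc c * μ {x | c < f x} = ∫⁻ _ in {x | c < f x}, c ∂μ := (setLIntegral_const _ c).symm
    _ < ∫⁻ x in {x | c < f x}, f x ∂μ :=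
      setLIntegral_strict_mono (measurableSet_lt measurable_const hf) hμ hf
        (by rw [setLIntegral_const]; finiteness) (ae_of_all _ fun _ hx => hx)
    _ ≤ ∫⁻ x, f x ∂μ := setLIntegral_le_lintegral _ _

namespace MeasureTheory.MeasurePreserving

variable {Γ : Type*} [MeasurableSpace Γ] {μ : Measure Γ} {T : Γ → Γ} {A : Set Γ}

theorem integral_indicator_one_comp_iterate (hT : MeasurePreserving T μ μ)
    (hA : MeasurableSet A) (i : ℕ) :
    ∫ x, A.indicator (fun _ => (1 : ℝ)) (T^[i] x) ∂μ = μ.real A := by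
  rw [← integral_map (hT.iterate i).measurable.aemeasurable
    (stronglyMeasurable_const.indicator hA).aestronglyMeasurable, (hT.iterate i).map_eq]
  exact integral_indicator_one hA

theorem integrable_indicator_one_comp_iterate [IsFiniteMeasure μ]
    (hT : MeasurePreserving T μ μ) (hA : MeasurableSet A) (i : ℕ) :
    Integrable (fun x => A.indicator (fun _ => (1 : ℝ)) (T^[i] x)) μ :=
  (hT.iterate i).integrable_comp_of_integrable ((integrable_const _).indicator hA)

end MeasureTheory.MeasurePreserving

namespace birkhoffAvg

variable {Γ : Type*} {T : Γ → Γ} {A : Set Γ} {n : ℕ}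

theorem compl (hn : n ≠ 0) (x : Γ) : birkhoffAvg T Aᶜ n x = 1 - birkhoffAvg T A n x := by
  simp only [birkhoffAvg, Set.indicator_compl, Pi.sub_apply, Finset.sum_sub_distrib,
    Finset.sum_const, Finset.card_range, nsmul_eq_mul, mul_one, mul_sub]
  field_simp

theorem tendsto_compl {x : Γ} {L : ℝ} (h : Tendsto (birkhoffAvg T A · x) atTop (𝓝 L)) :
    Tendsto (birkhoffAvg T Aᶜ · x) atTop (𝓝 (1 - L)) :=
  (tendsto_const_nhds.sub h).congr' <|
    (eventually_ne_atTop 0).mono fun _ hn => (compl hn x).symm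

theorem nonneg (x : Γ) : 0 ≤ birkhoffAvg T A n x :=
  mul_nonneg (by positivity) <|
    Finset.sum_nonneg fun _ _ => Set.indicator_nonneg (fun _ _ => zero_le_one) _

variable [MeasurableSpace Γ] {μ : Measure Γ}

theorem measurable (hT : Measurable T) (hA : MeasurableSet A) (n : ℕ) :
    Measurable (birkhoffAvg T A n) :=
  (Finset.measurable_sum _ fun i _ =>
    (measurable_const.indicator hA).comp (hT.iterate i)).const_mul _

variable [IsFiniteMeasure μ]

theorem integral (hT : MeasurePreserving T μ μ) (hA : MeasurableSet A) (hn : n ≠ 0) :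
    ∫ x, birkhoffAvg T A n x ∂μ = μ.real A := by
  unfold birkhoffAvg
  rw [integral_const_mul, integral_finsetSum _ fun i _ =>
    hT.integrable_indicator_one_comp_iterate hA i]
  simp [hT.integral_indicator_one_comp_iterate hA, hn]

theorem lintegral_ofReal (hT : MeasurePreserving T μ μ) (hA : MeasurableSet A) (hn : n ≠ 0) :
    ∫⁻ x, ENNReal.ofReal (birkhoffAvg T A n x) ∂μ = μ A := by
  have hint : Integrable (birkhoffAvg T A n) μ :=
    (integrable_finsetSum _ fun i _ => hT.integrable_indicator_one_comp_iterate hA i).const_mul _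
  rw [← ofReal_integral_eq_lintegral_ofReal hint (ae_of_all _ nonneg), integral hT hA hn,
    ofReal_measureReal]

theorem lintegral_liminf_ofReal_le (hT : MeasurePreserving T μ μ) (hA : MeasurableSet A) :
    ∫⁻ x, liminf (fun n => ENNReal.ofReal (birkhoffAvg T A n x)) atTop ∂μ ≤ μ A :=
  calc _ ≤ liminf (fun n => ∫⁻ x, ENNReal.ofReal (birkhoffAvg T A n x) ∂μ) atTop :=
        lintegral_liminf_le fun n => (measurable hT.measurable hA n).ennreal_ofReal
    _ = μ A := by
        rw [liminf_congr ((eventually_ne_atTop 0).mono fun n hn => lintegral_ofReal hT hA hn),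
          liminf_const]

theorem measure_setOf_tendsto_gt_lt (hT : MeasurePreserving T μ μ) (hA : MeasurableSet A)
    {c : ℝ} (hc : 0 ≤ c) {r : ℝ≥0∞} (hr : r ≠ 0) (hAr : μ A ≤ ENNReal.ofReal c * r) :
    μ {x | ∃ L, Tendsto (birkhoffAvg T A · x) atTop (𝓝 L) ∧ c < L} < r := by
  set h : Γ → ℝ≥0∞ := fun x => liminf (fun n => ENNReal.ofReal (birkhoffAvg T A n x)) atTop
  have hsub : {x | ∃ L, Tendsto (birkhoffAvg T A · x) atTop (𝓝 L) ∧ c < L} ⊆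
      {x | ENNReal.ofReal c < h x} := by
    rintro x ⟨L, hL, hcL⟩
    have hlim : h x = ENNReal.ofReal L := ((ENNReal.continuous_ofReal.tendsto L).comp hL).liminf_eq
    rw [Set.mem_ofPred_eq, hlim]
    exact (ENNReal.ofReal_lt_ofReal_iff (hc.trans_lt hcL)).2 hcL
  refine (measure_mono hsub).trans_lt ?_
  rcases eq_or_ne (μ {x | ENNReal.ofReal c < h x}) 0 with h0 | h0
  · exact h0 ▸ pos_iff_ne_zero.2 hr
  refine lt_of_mul_lt_mul_left' (a := ENNReal.ofReal c) ?_
  calc _ < ∫⁻ x, h x ∂μ := mul_meas_gt_lt_lintegral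
        (.liminf fun n => (measurable hT.measurable hA n).ennreal_ofReal) ENNReal.ofReal_ne_top h0
    _ ≤ μ A := lintegral_liminf_ofReal_le hT hA
    _ ≤ _ := hAr

end birkhoffAvg

theorem stmt_0_general {Γ : Type*} [MeasurableSpace Γ] (μ : Measure Γ) [IsProbabilityMeasure μ]
    (T : Γ → Γ) (hT : MeasurePreserving T μ μ)
    (ε k : ℝ) (hε : 0 < ε) (hk1 : 1 ≤ k)
    (E : Set Γ) (hE : MeasurableSet E) (hEμ : μ E = ENNReal.ofReal (1 - ε))
    (B : Set Γ)
    (hB : B = {x : Γ | ∃ L : ℝ,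
      Tendsto (fun n => birkhoffAvg T E n x) atTop (nhds L) ∧ L < 1 - k * ε}) :
    μ B < ENNReal.ofReal (1 / k) := by
  have hk : 0 < k := one_pos.trans_le hk1
  have hEc : μ Eᶜ ≤ ENNReal.ofReal (k * ε) * ENNReal.ofReal (1 / k) := by
    rw [← ENNReal.ofReal_mul (by positivity), show k * ε * (1 / k) = ε by field_simp,
      prob_compl_eq_one_sub hE, hEμ, tsub_le_iff_right]
    calc (1 : ℝ≥0∞) = ENNReal.ofReal (ε + (1 - ε)) := by simp
      _ ≤ _ := ENNReal.ofReal_add_le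
  have hBsub : B ⊆ {x | ∃ L, Tendsto (birkhoffAvg T Eᶜ · x) atTop (𝓝 L) ∧ k * ε < L} := by
    rw [hB]
    rintro x ⟨L, hL, hLk⟩
    exact ⟨1 - L, birkhoffAvg.tendsto_compl hL, by linarith⟩
  exact (measure_mono hBsub).trans_lt <| birkhoffAvg.measure_setOf_tendsto_gt_lt hT hE.compl
    (by positivity) (by simpa using hk) hEc

theorem stmt_0 {Γ : Type*} [MeasurableSpace Γ] (μ : Measure Γ) [IsProbabilityMeasure μ]
    (T : Γ → Γ) (hT : MeasurePreserving T μ μ)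
    (ε k : ℝ) (hε : 0 < ε) (hk1 : 1 ≤ k) (hk2 : k ≤ 1 / ε)
    (E : Set Γ) (hE : MeasurableSet E) (hEμ : μ E = ENNReal.ofReal (1 - ε))
    (B : Set Γ)
    (hB : B = {x : Γ | ∃ L : ℝ,
      Tendsto (fun n => birkhoffAvg T E n x) atTop (nhds L) ∧ L < 1 - k * ε}) :
    μ B < ENNReal.ofReal (1 / k) :=
  stmt_0_general μ T hT ε k hε hk1 E hE hEμ B hB
end

section
/- Let (Γ, μ) be a probability space and T : Γ → Γ a measure-preserving map. Let ε, δ be real numbers with 0 ≤ ε ≤ 1 and 0 ≤ δ ≤ 1. Let E ⊆ Γ be a measurable set and let G' ⊆ Γ be a measurable set with μ(G') = 1 − δ such that for every x ∈ G' the Birkhoff time average Â_E(x) = lim_{n→∞} (1/n) ∑_{i=0}^{n−1} 1_E(T^i x) exists and satisfies Â_E(x) ≥ 1 − ε. Then for every x ∈ G' one has |Â_E(x) − μ(E)| ≤ ε + δ − εδ. -/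
/-!
Since `T` preserves `μ`, every finite time average of `1_E` has integral `μ E`. By dominated
convergence the integral over `G'` of the limit time average is therefore at most `μ E`, while
it is at least `(1 - ε) μ G' ≥ (1 - ε)(1 - δ)`. The time average at a point of `G'` lies in
`[1 - ε, 1]` and `μ E` in `[(1 - ε)(1 - δ), 1]`, so they differ by at most `ε + δ - εδ`.
-/

open MeasureTheory Filter

open Topology

section BirkhoffAverage

variable {α F : Type*} [MeasurableSpace α] {μ : Measure α} {T : α → α}
  [NormedAddCommGroup F] [NormedSpace ℝ F] {g : α → F}

theorem integral_birkhoffSum (hT : MeasurePreserving T μ μ) (hg : Integrable g μ) (n : ℕ) :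
    ∫ x, birkhoffSum T g n x ∂μ = n • ∫ x, g x ∂μ := by
  have integral_comp_iterate (i : ℕ) : ∫ x, g (T^[i] x) ∂μ = ∫ x, g x ∂μ := by
    have hTi := hT.iterate i
    have hg' : AEStronglyMeasurable g (μ.map T^[i]) := by
      rw [hTi.map_eq]; exact hg.aestronglyMeasurable
    rw [← integral_map hTi.aemeasurable hg', hTi.map_eq]
  have integrable_comp_iterate (i : ℕ) : Integrable (fun x => g (T^[i] x)) μ :=
    (hT.iterate i).integrable_comp_of_integrable hg
  simp only [birkhoffSum]
  rw [integral_finsetSum _ fun i _ => integrable_comp_iterate i]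
  simp only [integral_comp_iterate, Finset.sum_const, Finset.card_range]

theorem integral_birkhoffAverage (hT : MeasurePreserving T μ μ) (hg : Integrable g μ) {n : ℕ}
    (hn : n ≠ 0) : ∫ x, birkhoffAverage ℝ T g n x ∂μ = ∫ x, g x ∂μ := by
  simp only [birkhoffAverage]
  rw [integral_smul, integral_birkhoffSum hT hg, ← Nat.cast_smul_eq_nsmul ℝ, smul_smul,
    inv_mul_cancel₀ (Nat.cast_ne_zero.mpr hn), one_smul]

end BirkhoffAverage

section TimeAverageOfSet

variable {Γ : Type*} {T : Γ → Γ} {E G : Set Γ}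

theorem birkhoffAvg_eq_birkhoffAverage (T : Γ → Γ) (E : Set Γ) (n : ℕ) (x : Γ) :
    birkhoffAvg T E n x = birkhoffAverage ℝ T (E.indicator 1) n x :=
  rfl

theorem birkhoffAvg_mem_Icc (T : Γ → Γ) (E : Set Γ) (n : ℕ) (x : Γ) :
    birkhoffAvg T E n x ∈ Set.Icc 0 1 := by
  have indicator_mem_Icc (y : Γ) : E.indicator (fun _ => (1 : ℝ)) y ∈ Set.Icc 0 1 := by
    by_cases hy : y ∈ E <;> simp [hy]
  rcases Nat.eq_zero_or_pos n with rfl | hn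
  · simp [birkhoffAvg]
  have sum_le : ∑ i ∈ Finset.range n, E.indicator (fun _ => (1 : ℝ)) (T^[i] x) ≤ n := by
    simpa using Finset.sum_le_card_nsmul (Finset.range n) _ 1 fun i _ => (indicator_mem_Icc _).2
  refine ⟨mul_nonneg (by positivity) (Finset.sum_nonneg fun i _ => (indicator_mem_Icc _).1), ?_⟩
  exact inv_mul_le_one_of_le₀ sum_le (Nat.cast_nonneg n)

theorem norm_birkhoffAvg_le_one (T : Γ → Γ) (E : Set Γ) (n : ℕ) (x : Γ) :
    ‖birkhoffAvg T E n x‖ ≤ 1 := by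
  rw [Real.norm_of_nonneg (birkhoffAvg_mem_Icc T E n x).1]
  exact (birkhoffAvg_mem_Icc T E n x).2

theorem mem_Icc_of_tendsto_birkhoffAvg {x : Γ} {L : ℝ}
    (hL : Tendsto (birkhoffAvg T E · x) atTop (𝓝 L)) : L ∈ Set.Icc 0 1 :=
  isClosed_Icc.mem_of_tendsto hL (Eventually.of_forall fun n => birkhoffAvg_mem_Icc T E n x)

variable [MeasurableSpace Γ] {μ : Measure Γ}

theorem measurable_birkhoffAvg (hT : Measurable T) (hE : MeasurableSet E) (n : ℕ) :
    Measurable (birkhoffAvg T E n) :=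
  (Finset.measurable_sum _ fun i _ =>
    (measurable_const.indicator hE).comp (hT.iterate i)).const_mul _

theorem integrable_birkhoffAvg [IsFiniteMeasure μ] (hT : Measurable T) (hE : MeasurableSet E)
    (n : ℕ) : Integrable (birkhoffAvg T E n) μ :=
  (integrable_const 1).mono' (measurable_birkhoffAvg hT hE n).aestronglyMeasurable
    (Eventually.of_forall (norm_birkhoffAvg_le_one T E n))

theorem integral_birkhoffAvg [IsFiniteMeasure μ] (hT : MeasurePreserving T μ μ)
    (hE : MeasurableSet E) {n : ℕ} (hn : n ≠ 0) :
    ∫ x, birkhoffAvg T E n x ∂μ = μ.real E := by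
  simp only [birkhoffAvg_eq_birkhoffAverage]
  rw [integral_birkhoffAverage hT ((integrable_const 1).indicator hE) hn,
    integral_indicator_one hE]

theorem setIntegral_birkhoffAvg_le [IsFiniteMeasure μ] (hT : MeasurePreserving T μ μ)
    (hE : MeasurableSet E) {n : ℕ} (hn : n ≠ 0) :
    ∫ x in G, birkhoffAvg T E n x ∂μ ≤ μ.real E := by
  rw [← integral_birkhoffAvg hT hE hn]
  exact setIntegral_le_integral (integrable_birkhoffAvg hT.measurable hE n)
    (Eventually.of_forall fun x => (birkhoffAvg_mem_Icc T E n x).1)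

theorem mul_measureReal_le_of_tendsto_birkhoffAvg [IsFiniteMeasure μ]
    (hT : MeasurePreserving T μ μ) (hE : MeasurableSet E) (hG : MeasurableSet G) {c : ℝ}
    (h : ∀ x ∈ G, ∃ L, Tendsto (birkhoffAvg T E · x) atTop (𝓝 L) ∧ c ≤ L) :
    c * μ.real G ≤ μ.real E := by
  -- off `G` the value of `limUnder` is junk, but only values on `G` are ever used
  set f : Γ → ℝ := fun x => limUnder atTop (birkhoffAvg T E · x)
  have tendsto_f : ∀ x ∈ G, Tendsto (birkhoffAvg T E · x) atTop (𝓝 (f x)) := fun x hx => by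
    obtain ⟨L, hL, -⟩ := h x hx
    rwa [show f x = L from hL.limUnder_eq]
  have le_f : ∀ x ∈ G, c ≤ f x := fun x hx => by
    obtain ⟨L, hL, hcL⟩ := h x hx
    rwa [show f x = L from hL.limUnder_eq]
  have tendsto_f_ae :
      ∀ᵐ x ∂μ.restrict G, Tendsto (birkhoffAvg T E · x) atTop (𝓝 (f x)) :=
    ae_restrict_of_forall_mem hG tendsto_f
  have avg_aesm (n : ℕ) : AEStronglyMeasurable (birkhoffAvg T E n) (μ.restrict G) :=
    (measurable_birkhoffAvg hT.measurable hE n).aestronglyMeasurable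
  have integrableOn_f : IntegrableOn f G μ := by
    refine (integrable_const 1).mono' (aestronglyMeasurable_of_tendsto_ae atTop avg_aesm
      tendsto_f_ae) (ae_restrict_of_forall_mem hG fun x hx => ?_)
    have hfx := mem_Icc_of_tendsto_birkhoffAvg (tendsto_f x hx)
    rw [Real.norm_of_nonneg hfx.1]
    exact hfx.2
  have tendsto_integral : Tendsto (fun n => ∫ x in G, birkhoffAvg T E n x ∂μ) atTop
      (𝓝 (∫ x in G, f x ∂μ)) :=
    tendsto_integral_of_dominated_convergence (fun _ => 1) avg_aesm (integrable_const 1)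
      (fun n => Eventually.of_forall (norm_birkhoffAvg_le_one T E n)) tendsto_f_ae
  calc c * μ.real G ≤ ∫ x in G, f x ∂μ :=
        setIntegral_ge_of_const_le_real hG (measure_ne_top μ G) le_f integrableOn_f
    _ ≤ μ.real E := le_of_tendsto tendsto_integral <| (eventually_ne_atTop 0).mono
        fun n hn => setIntegral_birkhoffAvg_le hT hE hn

end TimeAverageOfSet

theorem stmt_3_general {Γ : Type*} [MeasurableSpace Γ] (μ : Measure Γ) [IsProbabilityMeasure μ]
    (T : Γ → Γ) (hT : MeasurePreserving T μ μ)
    (ε δ : ℝ) (hε1 : ε ≤ 1) (hδ0 : 0 ≤ δ)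
    (E : Set Γ) (hE : MeasurableSet E)
    (G' : Set Γ) (hG' : MeasurableSet G') (hG'μ : μ G' = ENNReal.ofReal (1 - δ))
    (havg : ∀ x ∈ G', ∃ L : ℝ,
      Tendsto (fun n => birkhoffAvg T E n x) atTop (nhds L) ∧ 1 - ε ≤ L) :
    ∀ x ∈ G', ∀ L : ℝ, Tendsto (fun n => birkhoffAvg T E n x) atTop (nhds L) →
      |L - (μ E).toReal| ≤ ε + δ - ε * δ := by
  intro x hx L hL
  have measure_G' : 1 - δ ≤ μ.real G' := by
    rw [Measure.real, hG'μ, ENNReal.toReal_ofReal']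
    exact le_max_left _ _
  have measure_E : (1 - ε) * (1 - δ) ≤ μ.real E :=
    (mul_le_mul_of_nonneg_left measure_G' (by linarith)).trans
      (mul_measureReal_le_of_tendsto_birkhoffAvg hT hE hG' havg)
  obtain ⟨L', hL', hεL'⟩ := havg x hx
  have hεL : 1 - ε ≤ L := tendsto_nhds_unique hL' hL ▸ hεL'
  have hL1 : L ≤ 1 := (mem_Icc_of_tendsto_birkhoffAvg hL).2
  have hE1 : μ.real E ≤ 1 := measureReal_le_one
  have hδε : 0 ≤ δ * (1 - ε) := mul_nonneg hδ0 (sub_nonneg.2 hε1)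
  rw [← Measure.real, abs_le]
  constructor <;> linarith

theorem stmt_3 {Γ : Type*} [MeasurableSpace Γ] (μ : Measure Γ) [IsProbabilityMeasure μ]
    (T : Γ → Γ) (hT : MeasurePreserving T μ μ)
    (ε δ : ℝ) (hε0 : 0 ≤ ε) (hε1 : ε ≤ 1) (hδ0 : 0 ≤ δ) (hδ1 : δ ≤ 1)
    (E : Set Γ) (hE : MeasurableSet E)
    (G' : Set Γ) (hG' : MeasurableSet G') (hG'μ : μ G' = ENNReal.ofReal (1 - δ))
    (havg : ∀ x ∈ G', ∃ L : ℝ,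
      Tendsto (fun n => birkhoffAvg T E n x) atTop (nhds L) ∧ 1 - ε ≤ L) :
    ∀ x ∈ G', ∀ L : ℝ, Tendsto (fun n => birkhoffAvg T E n x) atTop (nhds L) →
      |L - (μ E).toReal| ≤ ε + δ - ε * δ :=
  stmt_3_general μ T hT ε δ hε1 hδ0 E hE G' hG' hG'μ havg
end

section
/- Let (Γ, μ) be a probability space and T : Γ → Γ a measure-preserving map. Let ε be a real number with 0 < ε ≤ 1, and let E ⊆ Γ be a measurable set with μ(E) = 1 − ε. Let G be the set of points x ∈ Γ at which the Birkhoff time average Â_E(x) = lim_{n→∞} (1/n) ∑_{i=0}^{n−1} 1_E(T^i x) exists and satisfies Â_E(x) ≥ 1 − √ε. Then μ(G) > 1 − √ε, and for every x ∈ G one has |Â_E(x) − μ(E)| ≤ √ε. -/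
/-!
The time averages of `1_E` converge almost everywhere (Birkhoff's theorem, which for bounded
observables follows from Garsia's maximal inequality) to a function `φ` with `φ ≤ 1` and
`∫ φ = μ E = 1 - ε`, since the averages have the same integral as `1_E` and are dominated.
Markov's inequality for `1 - φ ≥ 0`, whose integral is `ε = √ε * √ε`, gives
`μ {φ < 1 - √ε} < √ε`. Finally `1 - √ε ≤ L ≤ 1` and `ε ≤ √ε` give `|L - (1 - ε)| ≤ √ε`.
-/

open MeasureTheory Filter

open Function Set
open scoped Topology

section BirkhoffMax

variable {α : Type*} (T : α → α) (g : α → ℝ)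

noncomputable def birkhoffMax (n : ℕ) (x : α) : ℝ :=
  (Finset.range (n + 1)).sup' Finset.nonempty_range_add_one fun k => birkhoffSum T g k x

variable {T g}

lemma birkhoffSum_le_birkhoffMax {k n : ℕ} (hk : k ≤ n) (x : α) :
    birkhoffSum T g k x ≤ birkhoffMax T g n x :=
  Finset.le_sup' (fun k => birkhoffSum T g k x) (Finset.mem_range.2 (Nat.lt_succ_of_le hk))

lemma birkhoffMax_nonneg (n : ℕ) (x : α) : 0 ≤ birkhoffMax T g n x := by
  simpa using birkhoffSum_le_birkhoffMax (T := T) (g := g) (Nat.zero_le n) x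

lemma birkhoffMax_mono (x : α) : Monotone fun n => birkhoffMax T g n x := fun _ _ hmn =>
  Finset.sup'_mono _ (Finset.range_subset_range.2 (Nat.succ_le_succ hmn)) _

lemma exists_birkhoffSum_pos_iff_exists_birkhoffMax_pos (x : α) :
    (∃ n, 0 < birkhoffSum T g n x) ↔ ∃ n, 0 < birkhoffMax T g n x := by
  refine ⟨fun ⟨n, hn⟩ => ⟨n, hn.trans_le (birkhoffSum_le_birkhoffMax le_rfl x)⟩, fun ⟨n, hn⟩ => ?_⟩
  obtain ⟨k, -, hk⟩ := Finset.exists_mem_eq_sup' Finset.nonempty_range_add_one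
    fun k => birkhoffSum T g k x
  exact ⟨k, hk ▸ hn⟩

lemma birkhoffMax_le_max_add (n : ℕ) (x : α) :
    birkhoffMax T g n x ≤ max 0 (g x + birkhoffMax T g n (T x)) := by
  refine Finset.sup'_le _ _ fun k hk => ?_
  rcases k with _ | k
  · exact le_max_left _ _
  · rw [birkhoffSum_succ']
    have hkn : k ≤ n := by have := Finset.mem_range.1 hk; omega
    exact le_max_of_le_right (add_le_add le_rfl (birkhoffSum_le_birkhoffMax hkn _))

lemma abs_birkhoffSum_le {C : ℝ} (hg : ∀ x, |g x| ≤ C) (n : ℕ) (x : α) :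
    |birkhoffSum T g n x| ≤ n * C := by
  calc |birkhoffSum T g n x| ≤ ∑ k ∈ Finset.range n, |g (T^[k] x)| :=
        Finset.abs_sum_le_sum_abs _ _
    _ ≤ n * C := by simpa using Finset.sum_le_sum fun k (_ : k ∈ Finset.range n) => hg (T^[k] x)

lemma abs_birkhoffMax_le {C : ℝ} (hg : ∀ x, |g x| ≤ C) (n : ℕ) (x : α) :
    |birkhoffMax T g n x| ≤ n * C := by
  rw [abs_of_nonneg (birkhoffMax_nonneg n x)]
  refine Finset.sup'_le _ _ fun k hk => ?_
  have hC : 0 ≤ C := (abs_nonneg _).trans (hg x)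
  calc birkhoffSum T g k x ≤ k * C := (le_abs_self _).trans (abs_birkhoffSum_le hg k x)
    _ ≤ n * C := by
      gcongr
      exact_mod_cast Nat.le_of_lt_succ (Finset.mem_range.1 hk)

variable [MeasurableSpace α]

lemma measurable_birkhoffSum (hT : Measurable T) (hg : Measurable g) (n : ℕ) :
    Measurable (birkhoffSum T g n) :=
  Finset.measurable_sum _ fun k _ => hg.comp (hT.iterate k)

lemma measurable_birkhoffMax (hT : Measurable T) (hg : Measurable g) (n : ℕ) :
    Measurable (birkhoffMax T g n) :=
  Finset.measurable_range_sup'' fun k _ => measurable_birkhoffSum hT hg k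

end BirkhoffMax

namespace MeasureTheory.MeasurePreserving

variable {α β E : Type*} [MeasurableSpace α] [MeasurableSpace β] [NormedAddCommGroup E]
  [NormedSpace ℝ E] {μ : Measure α} {ν : Measure β}

theorem integral_comp_of_aestronglyMeasurable {f : α → β} (hf : MeasurePreserving f μ ν)
    {g : β → E} (hg : AEStronglyMeasurable g ν) : ∫ x, g (f x) ∂μ = ∫ y, g y ∂ν := by
  rw [← integral_map hf.aemeasurable (hf.map_eq ▸ hg), hf.map_eq]

variable {T : α → α}

theorem integral_birkhoffAverage {f : α → ℝ} (hT : MeasurePreserving T μ μ)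
    (hf : Integrable f μ) {n : ℕ} (hn : n ≠ 0) :
    ∫ x, birkhoffAverage ℝ T f n x ∂μ = ∫ x, f x ∂μ := by
  have hcomp k : ∫ x, f (T^[k] x) ∂μ = ∫ x, f x ∂μ :=
    (hT.iterate k).integral_comp_of_aestronglyMeasurable hf.aestronglyMeasurable
  simp only [birkhoffAverage, birkhoffSum, smul_eq_mul]
  rw [integral_const_mul, integral_finsetSum (f := fun k x => f (T^[k] x)) _
    fun k _ => (hT.iterate k).integrable_comp_of_integrable hf]
  simp [hcomp, hn]

variable [IsFiniteMeasure μ] {g : α → ℝ} {C : ℝ}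

/-- Garsia: on `{0 < M}` one has `M ≤ g + M ∘ T`, while `∫ M = ∫ M ∘ T` and `M ∘ T ≥ 0`. -/
theorem setIntegral_birkhoffMax_pos_nonneg (hT : MeasurePreserving T μ μ) (hg : Measurable g)
    (hgC : ∀ x, |g x| ≤ C) (n : ℕ) :
    0 ≤ ∫ x in {x | 0 < birkhoffMax T g n x}, g x ∂μ := by
  set M := birkhoffMax T g n
  set A := {x | 0 < M x}
  have hMm : Measurable M := measurable_birkhoffMax hT.measurable hg n
  have hA : MeasurableSet A := measurableSet_lt measurable_const hMm
  have hM : Integrable M μ :=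
    .of_bound hMm.aestronglyMeasurable _ (ae_of_all _ (abs_birkhoffMax_le hgC n))
  have hMT : Integrable (M ∘ T) μ := hT.integrable_comp_of_integrable hM
  have hg_int : Integrable g μ := .of_bound hg.aestronglyMeasurable C (ae_of_all _ hgC)
  calc (0 : ℝ) = ∫ x, M x ∂μ - ∫ x, M (T x) ∂μ := by
        rw [hT.integral_comp_of_aestronglyMeasurable hMm.aestronglyMeasurable, sub_self]
    _ = ∫ x in A, M x ∂μ - ∫ x, M (T x) ∂μ := by
        rw [← setIntegral_eq_integral_of_forall_compl_eq_zero (s := A) fun x hx =>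
          (birkhoffMax_nonneg n x).antisymm' (not_lt.1 hx)]
    _ ≤ ∫ x in A, M x ∂μ - ∫ x in A, M (T x) ∂μ :=
        sub_le_sub_left (setIntegral_le_integral hMT
          (ae_of_all _ fun x => birkhoffMax_nonneg n (T x))) _
    _ = ∫ x in A, (M x - M (T x)) ∂μ := (integral_sub hM.integrableOn hMT.integrableOn).symm
    _ ≤ ∫ x in A, g x ∂μ := by
        refine setIntegral_mono_on (hM.sub hMT).integrableOn hg_int.integrableOn hA fun x hx => ?_
        rcases le_max_iff.1 (birkhoffMax_le_max_add (T := T) (g := g) n x) with h | h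
        · exact absurd hx h.not_gt
        · linarith

theorem setIntegral_exists_birkhoffSum_pos_nonneg (hT : MeasurePreserving T μ μ)
    (hg : Measurable g) (hgC : ∀ x, |g x| ≤ C) :
    0 ≤ ∫ x in {x | ∃ n, 0 < birkhoffSum T g n x}, g x ∂μ := by
  set A : ℕ → Set α := fun n => {x | 0 < birkhoffMax T g n x}
  have hA n : MeasurableSet (A n) :=
    measurableSet_lt measurable_const (measurable_birkhoffMax hT.measurable hg n)
  have hmono : Monotone A := fun m n hmn x hx => hx.trans_le (birkhoffMax_mono x hmn)
  have hunion : ⋃ n, A n = {x | ∃ n, 0 < birkhoffSum T g n x} := by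
    ext x
    simp [A, exists_birkhoffSum_pos_iff_exists_birkhoffMax_pos]
  have hg_int : Integrable g μ := .of_bound hg.aestronglyMeasurable C (ae_of_all _ hgC)
  rw [← hunion]
  exact ge_of_tendsto' (tendsto_setIntegral_of_monotone hA hmono hg_int.integrableOn)
    (setIntegral_birkhoffMax_pos_nonneg hT hg hgC)

end MeasureTheory.MeasurePreserving

theorem birkhoffSum_indicator {α M : Type*} [AddCommMonoid M] {T : α → α} {D : Set α}
    (hD : T ⁻¹' D = D) (g : α → M) (n : ℕ) :
    birkhoffSum T (D.indicator g) n = D.indicator (birkhoffSum T g n) := by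
  funext x
  have hk k : T^[k] x ∈ D ↔ x ∈ D := by
    rw [← mem_preimage, preimage_iterate_eq, iterate_fixed hD]
  by_cases hx : x ∈ D
  · simp [birkhoffSum, indicator_of_mem hx, indicator_of_mem ((hk _).2 hx)]
  · simp [birkhoffSum, indicator_of_notMem hx, indicator_of_notMem (mt (hk _).1 hx)]

theorem birkhoffSum_sub_const {α : Type*} (T : α → α) (f : α → ℝ) (c : ℝ) (n : ℕ) (x : α) :
    birkhoffSum T (fun y => f y - c) n x = birkhoffSum T f n x - n * c := by
  simp [birkhoffSum, Finset.sum_sub_distrib]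

namespace MeasureTheory.MeasurePreserving

variable {α : Type*} [MeasurableSpace α] {μ : Measure α} [IsFiniteMeasure μ] {T : α → α}
  {f : α → ℝ} {C : ℝ}

theorem mul_measureReal_le_setIntegral (hT : MeasurePreserving T μ μ) (hf : Measurable f)
    (hfC : ∀ x, |f x| ≤ C) {D : Set α} (hDm : MeasurableSet D) (hD : T ⁻¹' D = D) {c : ℝ}
    (hc : ∀ x ∈ D, ∃ n : ℕ, n * c < birkhoffSum T f n x) :
    c * μ.real D ≤ ∫ x in D, f x ∂μ := by
  set g := D.indicator fun x => f x - c
  have hgC x : |g x| ≤ C + |c| :=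
    calc |g x| ≤ |f x - c| := norm_indicator_le_norm_self (fun x => f x - c) x
      _ ≤ C + |c| := by linarith [abs_sub (f x) c, hfC x]
  have hset : {x | ∃ n, 0 < birkhoffSum T g n x} = D := by
    ext x
    by_cases hx : x ∈ D
    · simpa [g, birkhoffSum_indicator hD, hx, birkhoffSum_sub_const] using hc x hx
    · simp [g, birkhoffSum_indicator hD, hx]
  have h0 : 0 ≤ ∫ x in {x | ∃ n, 0 < birkhoffSum T g n x}, g x ∂μ :=
    setIntegral_exists_birkhoffSum_pos_nonneg hT ((hf.sub measurable_const).indicator hDm) hgC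
  have hf_int : Integrable f μ := .of_bound hf.aestronglyMeasurable C (ae_of_all _ hfC)
  rw [hset, setIntegral_congr_fun hDm fun x hx => indicator_of_mem hx _,
    integral_sub hf_int.integrableOn (integrable_const c).integrableOn, setIntegral_const,
    smul_eq_mul] at h0
  linarith

end MeasureTheory.MeasurePreserving

namespace Filter

variable {ι : Type*} {l : Filter ι} [l.NeBot] {u v : ι → ℝ}

theorem limsup_le_limsup_of_tendsto_sub (hv : IsBoundedUnder (· ≤ ·) l v)
    (hv' : IsBoundedUnder (· ≥ ·) l v) (h : Tendsto (fun i => u i - v i) l (𝓝 0)) :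
    limsup u l ≤ limsup v l := by
  have h' : Tendsto (u - v) l (𝓝 0) := h
  simpa [h'.limsup_eq] using limsup_add_le hv' hv h'.isCoboundedUnder_le h'.isBoundedUnder_le

theorem liminf_le_liminf_of_tendsto_sub (hu : IsBoundedUnder (· ≤ ·) l u)
    (hu' : IsBoundedUnder (· ≥ ·) l u) (h : Tendsto (fun i => u i - v i) l (𝓝 0)) :
    liminf u l ≤ liminf v l := by
  have h' : Tendsto (v - u) l (𝓝 0) := by simpa [Pi.sub_def] using h.neg
  simpa [h'.liminf_eq] using le_liminf_add hu' hu h'.isBoundedUnder_ge h'.isCoboundedUnder_ge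

end Filter

section BirkhoffAverage

variable {α : Type*} {T : α → α} {f : α → ℝ} {C : ℝ}

theorem abs_birkhoffAverage_le (hfC : ∀ x, |f x| ≤ C) (n : ℕ) (x : α) :
    |birkhoffAverage ℝ T f n x| ≤ C := by
  rcases n.eq_zero_or_pos with rfl | hn
  · simpa using (abs_nonneg _).trans (hfC x)
  · rw [birkhoffAverage, smul_eq_mul, abs_mul, abs_inv, Nat.abs_cast,
      inv_mul_le_iff₀ (by positivity)]
    exact abs_birkhoffSum_le hfC n x

theorem isBoundedUnder_le_birkhoffAverage (hfC : ∀ x, |f x| ≤ C) (l : Filter ℕ) (x : α) :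
    IsBoundedUnder (· ≤ ·) l (birkhoffAverage ℝ T f · x) :=
  isBoundedUnder_of ⟨C, fun n => (le_abs_self _).trans (abs_birkhoffAverage_le hfC n x)⟩

theorem isBoundedUnder_ge_birkhoffAverage (hfC : ∀ x, |f x| ≤ C) (l : Filter ℕ) (x : α) :
    IsBoundedUnder (· ≥ ·) l (birkhoffAverage ℝ T f · x) :=
  isBoundedUnder_of ⟨-C, fun n => neg_le_of_abs_le (abs_birkhoffAverage_le hfC n x)⟩

theorem tendsto_birkhoffAverage_apply_sub (hfC : ∀ x, |f x| ≤ C) (x : α) :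
    Tendsto (fun n => birkhoffAverage ℝ T f n (T x) - birkhoffAverage ℝ T f n x) atTop (𝓝 0) :=
  tendsto_birkhoffAverage_apply_sub_birkhoffAverage' ℝ
    (isBounded_iff_forall_norm_le.2 ⟨C, by rintro _ ⟨y, rfl⟩; exact hfC y⟩) T x

theorem limsup_birkhoffAverage_apply (hfC : ∀ x, |f x| ≤ C) (x : α) :
    limsup (birkhoffAverage ℝ T f · (T x)) atTop = limsup (birkhoffAverage ℝ T f · x) atTop :=
  le_antisymm
    (limsup_le_limsup_of_tendsto_sub (isBoundedUnder_le_birkhoffAverage hfC _ x)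
      (isBoundedUnder_ge_birkhoffAverage hfC _ x) (tendsto_birkhoffAverage_apply_sub hfC x))
    (limsup_le_limsup_of_tendsto_sub (isBoundedUnder_le_birkhoffAverage hfC _ (T x))
      (isBoundedUnder_ge_birkhoffAverage hfC _ (T x))
      (by simpa using (tendsto_birkhoffAverage_apply_sub hfC x).neg))

theorem liminf_birkhoffAverage_apply (hfC : ∀ x, |f x| ≤ C) (x : α) :
    liminf (birkhoffAverage ℝ T f · (T x)) atTop = liminf (birkhoffAverage ℝ T f · x) atTop :=
  le_antisymm
    (liminf_le_liminf_of_tendsto_sub (isBoundedUnder_le_birkhoffAverage hfC _ (T x))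
      (isBoundedUnder_ge_birkhoffAverage hfC _ (T x)) (tendsto_birkhoffAverage_apply_sub hfC x))
    (liminf_le_liminf_of_tendsto_sub (isBoundedUnder_le_birkhoffAverage hfC _ x)
      (isBoundedUnder_ge_birkhoffAverage hfC _ x)
      (by simpa using (tendsto_birkhoffAverage_apply_sub hfC x).neg))

theorem abs_limsup_birkhoffAverage_le (hfC : ∀ x, |f x| ≤ C) (x : α) :
    |limsup (birkhoffAverage ℝ T f · x) atTop| ≤ C :=
  abs_le.2
    ⟨le_limsup_of_frequently_le
      (.of_forall fun n => neg_le_of_abs_le (abs_birkhoffAverage_le hfC n x))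
      (isBoundedUnder_le_birkhoffAverage hfC _ x),
    limsup_le_of_le (isBoundedUnder_ge_birkhoffAverage hfC _ x).isCoboundedUnder_le
      (.of_forall fun n => (le_abs_self _).trans (abs_birkhoffAverage_le hfC n x))⟩

theorem exists_mul_lt_birkhoffSum_of_frequently {c : ℝ} {x : α}
    (h : ∃ᶠ n in atTop, c < birkhoffAverage ℝ T f n x) :
    ∃ n : ℕ, n * c < birkhoffSum T f n x := by
  obtain ⟨n, hc, hn⟩ := (h.and_eventually (eventually_gt_atTop 0)).exists
  rw [birkhoffAverage, smul_eq_mul, lt_inv_mul_iff₀ (by positivity)] at hc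
  exact ⟨n, hc⟩

theorem measurable_birkhoffAverage [MeasurableSpace α] (hT : Measurable T) (hf : Measurable f)
    (n : ℕ) : Measurable (birkhoffAverage ℝ T f n) :=
  (measurable_birkhoffSum hT hf n).const_smul ((n : ℝ)⁻¹)

end BirkhoffAverage

namespace MeasureTheory.MeasurePreserving

variable {α : Type*} [MeasurableSpace α] {μ : Measure α} [IsFiniteMeasure μ] {T : α → α}
  {f : α → ℝ} {C : ℝ}

/-- The invariant set `D` satisfies `b * μ D ≤ ∫ x in D, f x ∂μ ≤ a * μ D`, by the maximal
ergodic theorem applied to `f - b` and `a - f` on `D`. -/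
theorem measure_liminf_lt_lt_limsup_birkhoffAverage (hT : MeasurePreserving T μ μ)
    (hf : Measurable f) (hfC : ∀ x, |f x| ≤ C) {a b : ℝ} (hab : a < b) :
    μ {x | liminf (birkhoffAverage ℝ T f · x) atTop < a ∧
      b < limsup (birkhoffAverage ℝ T f · x) atTop} = 0 := by
  set D := {x | liminf (birkhoffAverage ℝ T f · x) atTop < a ∧
    b < limsup (birkhoffAverage ℝ T f · x) atTop}
  have hA := measurable_birkhoffAverage hT.measurable hf
  have hDm : MeasurableSet D :=
    (measurableSet_lt (.liminf hA) measurable_const).inter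
      (measurableSet_lt measurable_const (.limsup hA))
  have hD : T ⁻¹' D = D := by
    ext x
    simp [D, liminf_birkhoffAverage_apply hfC, limsup_birkhoffAverage_apply hfC]
  have hup : ∀ x ∈ D, ∃ n : ℕ, n * b < birkhoffSum T f n x := fun x hx =>
    exists_mul_lt_birkhoffSum_of_frequently <| frequently_lt_of_lt_limsup
      (isBoundedUnder_ge_birkhoffAverage hfC _ x).isCoboundedUnder_le hx.2
  have hdown : ∀ x ∈ D, ∃ n : ℕ, n * -a < birkhoffSum T (-f) n x := fun x hx =>
    exists_mul_lt_birkhoffSum_of_frequently <| by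
      simpa [birkhoffAverage_neg] using frequently_lt_of_liminf_lt
        (isBoundedUnder_le_birkhoffAverage hfC _ x).isCoboundedUnder_ge hx.1
  have h_ge := mul_measureReal_le_setIntegral hT hf hfC hDm hD hup
  have h_le := mul_measureReal_le_setIntegral hT hf.neg (by simpa using hfC) hDm hD hdown
  simp only [Pi.neg_apply, integral_neg] at h_le
  have : μ.real D = 0 := by nlinarith [measureReal_nonneg (μ := μ) (s := D)]
  exact (measureReal_eq_zero_iff).1 this

theorem ae_tendsto_birkhoffAverage_limsup (hT : MeasurePreserving T μ μ) (hf : Measurable f)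
    (hfC : ∀ x, |f x| ≤ C) :
    ∀ᵐ x ∂μ, Tendsto (birkhoffAverage ℝ T f · x) atTop
      (𝓝 (limsup (birkhoffAverage ℝ T f · x) atTop)) := by
  have hnull (a b : ℚ) : ∀ᵐ x ∂μ, (a : ℝ) < b →
      ¬(liminf (birkhoffAverage ℝ T f · x) atTop < a ∧
        b < limsup (birkhoffAverage ℝ T f · x) atTop) := by
    by_cases hab : (a : ℝ) < b
    · filter_upwards [measure_eq_zero_iff_ae_notMem.1
        (measure_liminf_lt_lt_limsup_birkhoffAverage hT hf hfC hab)] with x hx _ using hx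
    · exact ae_of_all _ fun x h => absurd h hab
  filter_upwards [ae_all_iff.2 fun a => ae_all_iff.2 (hnull a)] with x hx
  have hle := isBoundedUnder_le_birkhoffAverage (T := T) hfC atTop x
  have hge := isBoundedUnder_ge_birkhoffAverage (T := T) hfC atTop x
  refine tendsto_of_liminf_eq_limsup ?_ rfl hle hge
  by_contra hne
  obtain ⟨a, hla, hab⟩ := exists_rat_btwn ((liminf_le_limsup hle hge).lt_of_ne hne)
  obtain ⟨b, hab, hbl⟩ := exists_rat_btwn hab
  exact hx a b (by exact_mod_cast hab) ⟨hla, hbl⟩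

theorem integral_limsup_birkhoffAverage (hT : MeasurePreserving T μ μ) (hf : Measurable f)
    (hfC : ∀ x, |f x| ≤ C) :
    ∫ x, limsup (birkhoffAverage ℝ T f · x) atTop ∂μ = ∫ x, f x ∂μ := by
  have hf_int : Integrable f μ := .of_bound hf.aestronglyMeasurable C (ae_of_all _ hfC)
  refine tendsto_nhds_unique (tendsto_integral_of_dominated_convergence (fun _ => C)
    (fun n => (measurable_birkhoffAverage hT.measurable hf n).aestronglyMeasurable)
    (integrable_const C) (fun n => ae_of_all _ (abs_birkhoffAverage_le hfC n))
    (ae_tendsto_birkhoffAverage_limsup hT hf hfC)) ?_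
  exact tendsto_const_nhds.congr' <| (eventually_ne_atTop 0).mono fun n hn =>
    (integral_birkhoffAverage hT hf_int hn).symm

end MeasureTheory.MeasurePreserving

theorem one_sub_sqrt_lt_measureReal_le {α : Type*} [MeasurableSpace α] {μ : Measure α}
    [IsProbabilityMeasure μ] {φ : α → ℝ} (hφ : Integrable φ μ) (hφ1 : ∀ x, φ x ≤ 1) {ε : ℝ}
    (hε : 0 < ε) (hint : ∫ x, φ x ∂μ = 1 - ε) :
    1 - √ε < μ.real {x | 1 - √ε ≤ φ x} := by
  set S := {x | √ε < 1 - φ x}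
  have hh : Integrable (fun x => 1 - φ x) μ := (integrable_const 1).sub hφ
  have hint' : ∫ x, (1 - φ x) ∂μ = ε := by
    rw [integral_sub (integrable_const 1) hφ, hint]
    simp
  have hS : μ.real S < √ε := by
    by_contra! hge
    have hsqrt := Real.sqrt_pos.2 hε
    have hne : μ S ≠ 0 := fun h0 => by
      rw [measureReal_def, h0, ENNReal.toReal_zero] at hge
      linarith
    have hlt := setIntegral_gt_gt hsqrt.le hh.integrableOn hne
    have hle : ∫ x in S, (1 - φ x) ∂μ ≤ ε :=
      hint' ▸ setIntegral_le_integral hh (ae_of_all _ fun x => sub_nonneg.2 (hφ1 x))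
    nlinarith [Real.mul_self_sqrt hε.le]
  have hcompl : {x | 1 - √ε ≤ φ x} = Sᶜ := by
    ext x
    exact sub_le_comm.trans (not_lt (a := √ε)).symm
  rw [hcompl, probReal_compl_eq_one_sub₀
    (nullMeasurableSet_lt aemeasurable_const hh.aemeasurable)]
  linarith

theorem abs_sub_one_sub_le_sqrt {ε L : ℝ} (hε0 : 0 ≤ ε) (hε1 : ε ≤ 1) (hL : 1 - √ε ≤ L)
    (hL1 : L ≤ 1) :
    |L - (1 - ε)| ≤ √ε := by
  have := Real.le_sqrt_self_iff.2 hε1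
  exact abs_le.2 ⟨by linarith, by linarith⟩

theorem stmt_4 {Γ : Type*} [MeasurableSpace Γ] (μ : Measure Γ) [IsProbabilityMeasure μ]
    (T : Γ → Γ) (hT : MeasurePreserving T μ μ)
    (ε : ℝ) (hε0 : 0 < ε) (hε1 : ε ≤ 1)
    (E : Set Γ) (hE : MeasurableSet E) (hEμ : μ E = ENNReal.ofReal (1 - ε))
    (G : Set Γ)
    (hG : G = {x : Γ | ∃ L : ℝ,
      Tendsto (fun n => birkhoffAvg T E n x) atTop (nhds L) ∧ 1 - Real.sqrt ε ≤ L}) :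
    ENNReal.ofReal (1 - Real.sqrt ε) < μ G ∧
      ∀ x ∈ G, ∀ L : ℝ, Tendsto (fun n => birkhoffAvg T E n x) atTop (nhds L) →
        |L - (μ E).toReal| ≤ Real.sqrt ε := by
  set f := E.indicator (1 : Γ → ℝ)
  have hf : Measurable f := measurable_one.indicator hE
  have hfC x : |f x| ≤ 1 := by by_cases hx : x ∈ E <;> simp [f, hx]
  change G = {x | ∃ L, Tendsto (birkhoffAverage ℝ T f · x) atTop (𝓝 L) ∧ 1 - √ε ≤ L} at hG
  set φ := fun x => limsup (birkhoffAverage ℝ T f · x) atTop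
  have hφ : Integrable φ μ := .of_bound (Measurable.limsup
      (measurable_birkhoffAverage hT.measurable hf)).aestronglyMeasurable 1
    (ae_of_all _ (abs_limsup_birkhoffAverage_le hfC))
  have hμE : (μ E).toReal = 1 - ε := by rw [hEμ, ENNReal.toReal_ofReal (by linarith)]
  have hφ_int : ∫ x, φ x ∂μ = 1 - ε := by
    rw [hT.integral_limsup_birkhoffAverage hf hfC, integral_indicator_one hE, measureReal_def, hμE]
  have hφ_large := one_sub_sqrt_lt_measureReal_le hφ
    (fun x => (le_abs_self _).trans (abs_limsup_birkhoffAverage_le hfC x)) hε0 hφ_int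
  have hφ_sub_G : {x | 1 - √ε ≤ φ x} ≤ᵐ[μ] G := by
    filter_upwards [hT.ae_tendsto_birkhoffAverage_limsup hf hfC] with x hx hxφ
    exact hG ▸ ⟨φ x, hx, hxφ⟩
  refine ⟨?_, fun x hx L hL => ?_⟩
  · calc ENNReal.ofReal (1 - √ε) < μ {x | 1 - √ε ≤ φ x} :=
          (ENNReal.ofReal_lt_iff_lt_toReal (sub_nonneg.2 (Real.sqrt_le_one.2 hε1))
            (measure_ne_top _ _)).2 hφ_large
      _ ≤ μ G := measure_mono_ae hφ_sub_G
  · rw [hG] at hx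
    obtain ⟨L', hL', hL'_ge⟩ := hx
    obtain rfl := tendsto_nhds_unique hL hL'
    rw [hμE]
    exact abs_sub_one_sub_le_sqrt hε0.le hε1 hL'_ge (le_of_tendsto' hL fun n =>
      (le_abs_self _).trans (abs_birkhoffAverage_le hfC n x))
end
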